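/- Let V be a vector space over ℂ with ℤ-indexed bilinear products aₙb, carrying an internal direct-sum grading V = ⊕_{n∈ℕ} Vₙ in which V₀ = ℂ𝟙 is one-dimensional spanned by a vector 𝟙 ≠ 0 and a₋₁𝟙 = a for all a ∈ V. Let λ ∈ ℂ, λ ≠ 0, and let P : V → V be an ordinary Rota-Baxter operator of weight λ which is homogeneous of degree N for some integer N ≤ 0 (P(Vₙ) ⊆ V_{n+N}, with Vₘ = 0 for m < 0). Then there exist subspaces V¹ and V² of V such that: V = V¹ ⊕ V²; both V¹ and V² are closed under all the products aₙb; both are graded, with Vₙ = (V¹ ∩ Vₙ) ⊕ (V² ∩ Vₙ) for every n ∈ ℕ; and P(a¹ + a²) = −λ·a¹ for all a¹ ∈ V¹, a² ∈ V² (so V¹ = P(V) and V² = ker P). Moreover P(𝟙) = 0 if and only if V¹ ∩ V₀ = 0, and P(𝟙) = −λ𝟙 if and only if V² ∩ V₀ = 0. -/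
import Mathlib


/-- An ordinary Rota-Baxter operator of weight `lam` on the ℤ-indexed products `μ`. -/
def OrdRBO {V : Type*} [AddCommGroup V] [Module ℂ V]
    (μ : ℤ → V →ₗ[ℂ] V →ₗ[ℂ] V) (P : V →ₗ[ℂ] V) (lam : ℂ) : Prop :=
  ∀ (n : ℤ) (a b : V),
    μ n (P a) (P b) = P (μ n (P a) b) + P (μ n a (P b)) + lam • P (μ n a b)

/-- A subspace closed under all the products `aₙb`. -/
def ClosedUnder {V : Type*} [AddCommGroup V] [Module ℂ V]
    (μ : ℤ → V →ₗ[ℂ] V →ₗ[ℂ] V) (W : Submodule ℂ V) : Prop :=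
  ∀ (n : ℤ) (a b : V), a ∈ W → b ∈ W → μ n a b ∈ W

/-- On a CFT-type graded algebra, a homogeneous ordinary Rota-Baxter operator of
weight `lam ≠ 0` and degree `N ≤ 0` induces a decomposition of `V` into a direct
sum of two graded subalgebras, with `P` acting as `−lam` times the projection onto
the first. -/
theorem stmt9 {V : Type*} [AddCommGroup V] [Module ℂ V]
    (μ : ℤ → V →ₗ[ℂ] V →ₗ[ℂ] V) (one : V)
    (Vg : ℕ → Submodule ℂ V) (hInt : DirectSum.IsInternal Vg)
    (hone : one ≠ 0) (hV0 : Vg 0 = Submodule.span ℂ {one})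
    (hcrea : ∀ a : V, μ (-1) a one = a)
    (lam : ℂ) (hlam : lam ≠ 0)
    (P : V →ₗ[ℂ] V) (hP : OrdRBO μ P lam)
    (N : ℤ) (hN : N ≤ 0)
    (hhom : ∀ (n : ℕ) (a : V), a ∈ Vg n →
      (0 ≤ (n : ℤ) + N → P a ∈ Vg ((n : ℤ) + N).toNat) ∧
      ((n : ℤ) + N < 0 → P a = 0)) :
    ∃ V1 V2 : Submodule ℂ V, IsCompl V1 V2 ∧
      ClosedUnder μ V1 ∧ ClosedUnder μ V2 ∧
      (∀ n : ℕ, Vg n = (V1 ⊓ Vg n) ⊔ (V2 ⊓ Vg n)) ∧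
      (∀ a ∈ V1, ∀ b ∈ V2, P (a + b) = -lam • a) ∧
      V1 = LinearMap.range P ∧ V2 = LinearMap.ker P ∧
      (P one = 0 ↔ V1 ⊓ Vg 0 = ⊥) ∧
      (P one = -lam • one ↔ V2 ⊓ Vg 0 = ⊥) := by
  have hone0 : one ∈ Vg 0 := hV0 ▸ Submodule.mem_span_singleton_self one
  -- P one is a multiple of one
  obtain ⟨c, hc⟩ : ∃ c : ℂ, P one = c • one := by
    rcases lt_or_eq_of_le hN with hNlt | hNeq
    · exact ⟨0, by rw [(hhom 0 one hone0).2 (by omega), zero_smul]⟩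
    · subst hNeq
      have h1 := (hhom 0 one hone0).1 (by norm_num)
      norm_num at h1
      rw [hV0] at h1
      exact (Submodule.mem_span_singleton.mp h1).imp fun d h => h.symm
  -- key identity : P ∘ P = -lam • P
  have hPP : ∀ a : V, P (P a) = -lam • P a := by
    intro a
    have h := hP (-1) a one
    rw [hc] at h
    simp only [map_smul, hcrea] at h
    -- h : c • P a = P (P a) + c • P a + lam • P a
    have h2 : P (P a) + lam • P a = 0 := by
      have h5 : (P (P a) + c • P a + lam • P a) - c • P a = 0 := by rw [← h]; simp
      calc P (P a) + lam • P a = (P (P a) + c • P a + lam • P a) - c • P a := by abel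
        _ = 0 := h5
    rw [neg_smul, eq_neg_iff_add_eq_zero]
    exact h2
  have hlam' : -lam ≠ 0 := neg_ne_zero.mpr hlam
  -- distinct graded pieces meet trivially
  have hdisj : ∀ {i j : ℕ}, i ≠ j → ∀ x : V, x ∈ Vg i → x ∈ Vg j → x = 0 := by
    intro i j hij x hxi hxj
    exact Submodule.disjoint_def.mp (hInt.submodule_iSupIndep.pairwiseDisjoint hij) x hxi hxj
  -- P preserves each graded piece
  have hPhom : ∀ (n : ℕ) (a : V), a ∈ Vg n → P a ∈ Vg n := by
    intro n a ha
    rcases lt_or_eq_of_le hN with hNlt | hNeq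
    · suffices h : P a = 0 by rw [h]; exact Submodule.zero_mem _
      rcases lt_or_ge ((n : ℤ) + N) 0 with h1 | h1
      · exact (hhom n a ha).2 h1
      · set m := ((n : ℤ) + N).toNat with hm
        have hPa : P a ∈ Vg m := (hhom n a ha).1 h1
        have hmN : (m : ℤ) = (n : ℤ) + N := Int.toNat_of_nonneg h1
        rcases lt_or_ge ((m : ℤ) + N) 0 with h2 | h2
        · have h0 : P (P a) = 0 := (hhom m (P a) hPa).2 h2
          have h4 := hPP a
          rw [h0] at h4
          rcases smul_eq_zero.mp h4.symm with h | h
          · exact absurd h hlam'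
          · exact h
        · have hP2 : P (P a) ∈ Vg ((m : ℤ) + N).toNat := (hhom m (P a) hPa).1 h2
          rw [hPP a] at hP2
          have hmem2 : -lam • P a ∈ Vg m := Submodule.smul_mem _ _ hPa
          have hne : ((m : ℤ) + N).toNat ≠ m := by omega
          have h5 := hdisj hne _ hP2 hmem2
          rcases smul_eq_zero.mp h5 with h | h
          · exact absurd h hlam'
          · exact h
    · subst hNeq
      have h1 := (hhom n a ha).1 (by omega)
      simpa using h1
  set V1 := LinearMap.range P with hV1
  set V2 := LinearMap.ker P with hV2
  have hV1fix : ∀ x ∈ V1, P x = -lam • x := by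
    rintro x ⟨b, rfl⟩
    exact hPP b
  -- decomposition of an arbitrary element
  have hdec : ∀ x : V, (-lam⁻¹ • P x) ∈ V1 ∧ (x - -lam⁻¹ • P x) ∈ V2 ∧
      x = (-lam⁻¹ • P x) + (x - -lam⁻¹ • P x) := by
    intro x
    refine ⟨⟨-lam⁻¹ • x, by rw [map_smul]⟩, ?_, by abel⟩
    rw [LinearMap.mem_ker, map_sub, map_smul, hPP, smul_smul, neg_mul_neg,
      inv_mul_cancel₀ hlam, one_smul, sub_self]
  refine ⟨V1, V2, ?_, ?_, ?_, ?_, ?_, rfl, rfl, ?_, ?_⟩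
  · constructor
    · rw [disjoint_iff_inf_le]
      rintro x ⟨hx1, hx2⟩
      have h1 : P x = -lam • x := hV1fix x hx1
      have h2 : P x = 0 := hx2
      rw [h2] at h1
      rcases smul_eq_zero.mp h1.symm with h | h
      · exact absurd h hlam'
      · exact h
    · rw [codisjoint_iff, eq_top_iff]
      intro x _
      obtain ⟨h1, h2, h3⟩ := hdec x
      exact h3 ▸ Submodule.add_mem_sup h1 h2
  · rintro n a b ⟨a', rfl⟩ ⟨b', rfl⟩
    exact ⟨μ n (P a') b' + μ n a' (P b') + lam • μ n a' b', by
      rw [map_add, map_add, map_smul, hP]⟩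
  · intro n a b ha hb
    have key := hP n a b
    rw [LinearMap.mem_ker.mp ha, LinearMap.mem_ker.mp hb] at key
    simp only [map_zero, LinearMap.map_zero, LinearMap.zero_apply, zero_add] at key
    have : lam • P (μ n a b) = 0 := by
      have := key.symm
      simpa using this
    rcases smul_eq_zero.mp this with h | h
    · exact absurd h hlam
    · exact LinearMap.mem_ker.mpr h
  · intro n
    refine le_antisymm ?_ (sup_le inf_le_right inf_le_right)
    intro a ha
    obtain ⟨h1, h2, h3⟩ := hdec a
    have hPa : P a ∈ Vg n := hPhom n a ha
    have hu : -lam⁻¹ • P a ∈ Vg n := Submodule.smul_mem _ _ hPa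
    have hw : a - -lam⁻¹ • P a ∈ Vg n := Submodule.sub_mem _ ha hu
    exact h3 ▸ Submodule.add_mem_sup ⟨h1, hu⟩ ⟨h2, hw⟩
  · intro a ha b hb
    rw [map_add, hV1fix a ha, LinearMap.mem_ker.mp hb, add_zero]
  · constructor
    · intro h
      rw [eq_bot_iff]
      rintro x ⟨hx1, hx0⟩
      rw [hV0] at hx0
      obtain ⟨d, rfl⟩ := Submodule.mem_span_singleton.mp hx0
      have h1 : P (d • one) = -lam • d • one := hV1fix _ hx1
      rw [map_smul, h, smul_zero] at h1
      rcases smul_eq_zero.mp h1.symm with hh | hh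
      · exact absurd hh hlam'
      · simp [hh]
    · intro h
      have h1 : P one ∈ V1 ⊓ Vg 0 := ⟨⟨one, rfl⟩, hPhom 0 one hone0⟩
      rw [h] at h1
      exact h1
  · constructor
    · intro h
      rw [eq_bot_iff]
      rintro x ⟨hx2, hx0⟩
      rw [hV0] at hx0
      obtain ⟨d, rfl⟩ := Submodule.mem_span_singleton.mp hx0
      have h1 : P (d • one) = 0 := LinearMap.mem_ker.mp hx2
      rw [map_smul, h, smul_smul, smul_eq_zero] at h1
      rcases h1 with hh | hh
      · rcases mul_eq_zero.mp hh with hd | hd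
        · simp [hd]
        · exact absurd hd hlam'
      · exact absurd hh hone
    · intro h
      have hw : one + lam⁻¹ • P one ∈ V2 ⊓ Vg 0 := by
        refine Submodule.mem_inf.mpr ⟨?_, ?_⟩
        · rw [LinearMap.mem_ker, map_add, map_smul, hPP, smul_smul,
            mul_neg, inv_mul_cancel₀ hlam, neg_one_smul, add_neg_cancel]
        · exact Submodule.add_mem _ hone0 (Submodule.smul_mem _ _ (hPhom 0 one hone0))
      rw [h, Submodule.mem_bot] at hw
      have h2 : lam • one + P one = 0 := by
        have := congrArg (fun y => lam • y) hw
        simpa [smul_add, smul_smul, mul_inv_cancel₀ hlam] using this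
      rw [neg_smul, eq_neg_iff_add_eq_zero, add_comm]
      exact h2
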